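/- For all real numbers a, b, c, the tensor R = a·Π + b·Φ + c·Ψ satisfies R.Π = 0. -/

import Mathlib

open scoped RealInnerProductSpace

noncomputable section

variable {V : Type*} [NormedAddCommGroup V] [InnerProductSpace ℝ V] [FiniteDimensional ℝ V]

/-- The orthogonal projection onto `D`, as a map `V → V`. -/
def projD (D : Submodule ℝ V) (X : V) : V := (D.orthogonalProjectionOnto X : V)

/-- The bilinear form `h(X,Y) = ⟪πX, πY⟫`. -/
def hForm (D : Submodule ℝ V) (X Y : V) : ℝ := ⟪projD D X, projD D Y⟫

/-- The 2-form `ω(X,Y) = h(JX, Y)`. -/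
def omForm (J : V →ₗ[ℝ] V) (D : Submodule ℝ V) (X Y : V) : ℝ := hForm D (J X) Y

/-- The standard Kähler curvature-type tensor `Π` of constant holomorphic sectional curvature. -/
def PiT (J : V →ₗ[ℝ] V) (U Vv W : V) : V :=
  (1/4 : ℝ) • (⟪Vv, W⟫ • U - ⟪U, W⟫ • Vv + ⟪J Vv, W⟫ • J U - ⟪J U, W⟫ • J Vv
    - (2 * ⟪J U, Vv⟫) • J W)

/-- The curvature-type tensor `Φ`. -/
def PhiT (J : V →ₗ[ℝ] V) (D : Submodule ℝ V) (U Vv W : V) : V :=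
  (1/8 : ℝ) • (⟪Vv, W⟫ • projD D U - ⟪U, W⟫ • projD D Vv
    + hForm D Vv W • U - hForm D U W • Vv
    + ⟪J Vv, W⟫ • projD D (J U) - ⟪J U, W⟫ • projD D (J Vv)
    + omForm J D Vv W • J U - omForm J D U W • J Vv
    - (2 * ⟪J U, Vv⟫) • projD D (J W) - (2 * omForm J D U Vv) • J W)

/-- The curvature-type tensor `Ψ(U,V)W = −ω(U,V)·J(πW)`. -/
def PsiT (J : V →ₗ[ℝ] V) (D : Submodule ℝ V) (U Vv W : V) : V :=
  -(omForm J D U Vv) • J (projD D W)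

/-- The derivation action of an endomorphism `A` on a bilinear form `T`. -/
def der2 (A : V → V) (T : V → V → ℝ) (X Y : V) : ℝ := -T (A X) Y - T X (A Y)

/-- The derivation action of an endomorphism `A` on a 4-multilinear form `T`. -/
def der4 (A : V → V) (T : V → V → V → V → ℝ) (X Y Z W : V) : ℝ :=
  -T (A X) Y Z W - T X (A Y) Z W - T X Y (A Z) W - T X Y Z (A W)

/-- The 4-form `S₀(X,Y,Z,W) = ⟪S(X,Y)Z, W⟫` associated with an endomorphism-valued 2-form. -/
def form4 (S : V → V → V → V) (X Y Z W : V) : ℝ := ⟪S X Y Z, W⟫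

/-- The 6-multilinear form `(R.S)(U,V,X,Y,Z,W) = (R(U,V).S₀)(X,Y,Z,W)`. -/
def dotRS (R S : V → V → V → V) (U Vv X Y Z W : V) : ℝ :=
  der4 (R U Vv) (form4 S) X Y Z W

/-! `Π` is the curvature tensor of constant holomorphic sectional curvature, so it is invariant
under the unitary Lie algebra: if `A` is skew-adjoint and commutes with `J`, then `A.Π₀ = 0`.
Each of `Π(U,V)`, `Φ(U,V)`, `Ψ(U,V)` is such an endomorphism (`π` is self-adjoint and commutes
with `J` because `D` is `J`-invariant), and both conditions are linear in the endomorphism. -/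

section Unitary

variable {E : Type*} [NormedAddCommGroup E] [InnerProductSpace ℝ E] {J : E →ₗ[ℝ] E}

/-- Membership in the unitary Lie algebra `𝔲(E, J)`, for endomorphisms given as plain maps. -/
structure IsUnitaryEndo (J : E →ₗ[ℝ] E) (A : E → E) : Prop where
  skew : ∀ X Y : E, ⟪A X, Y⟫ + ⟪A Y, X⟫ = 0
  comm : ∀ X : E, J (A X) = A (J X)

namespace IsUnitaryEndo

variable {A B : E → E}

lemma inner_apply_left (hA : IsUnitaryEndo J A) (X Y : E) : ⟪A X, Y⟫ = -⟪X, A Y⟫ := by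
  rw [real_inner_comm (A Y) X, eq_neg_iff_add_eq_zero, hA.skew]

lemma add (hA : IsUnitaryEndo J A) (hB : IsUnitaryEndo J B) : IsUnitaryEndo J (A + B) where
  skew X Y := by
    simp only [Pi.add_apply, inner_add_left]
    linear_combination hA.skew X Y + hB.skew X Y
  comm X := by simp only [Pi.add_apply, map_add, hA.comm, hB.comm]

lemma smul (r : ℝ) (hA : IsUnitaryEndo J A) : IsUnitaryEndo J (r • A) where
  skew X Y := by
    simp only [Pi.smul_apply, real_inner_smul_left]
    linear_combination r * hA.skew X Y
  comm X := by simp only [Pi.smul_apply, map_smul, hA.comm]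

end IsUnitaryEndo

lemma der4_form4_PiT_eq_zero {A : E → E} (hA : IsUnitaryEndo J A) (X Y Z W : E) :
    der4 A (form4 (PiT J)) X Y Z W = 0 := by
  simp only [der4, form4, PiT, real_inner_smul_left, inner_add_left, inner_sub_left, hA.comm,
    hA.inner_apply_left]
  ring

variable (hJ2 : ∀ X : E, J (J X) = -X) (hJg : ∀ X Y : E, ⟪J X, J Y⟫ = ⟪X, Y⟫)
include hJ2 hJg

lemma inner_J_left (X Y : E) : ⟪J X, Y⟫ = -⟪X, J Y⟫ := by
  rw [← hJg X (J Y), hJ2, inner_neg_right, neg_neg]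

lemma inner_J_add_inner_J (X Y : E) : ⟪J X, Y⟫ + ⟪J Y, X⟫ = 0 := by
  rw [inner_J_left hJ2 hJg, real_inner_comm X, neg_add_cancel]

lemma starProjection_J_comm {K : Submodule ℝ E} [K.HasOrthogonalProjection]
    (hJK : ∀ X ∈ K, J X ∈ K) (X : E) : K.starProjection (J X) = J (K.starProjection X) :=
  K.eq_starProjection_of_mem_of_inner_eq_zero (hJK _ (K.starProjection_apply_mem X))
    fun w hw => by
      rw [← map_sub, inner_J_left hJ2 hJg, K.starProjection_inner_eq_zero _ _ (hJK w hw), neg_zero]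

lemma inner_starProjection_J_add {K : Submodule ℝ E} [K.HasOrthogonalProjection]
    (hJK : ∀ X ∈ K, J X ∈ K) (X Y : E) :
    ⟪K.starProjection (J X), Y⟫ + ⟪K.starProjection (J Y), X⟫ = 0 := by
  rw [K.inner_starProjection_left_eq_right, starProjection_J_comm hJ2 hJg hJK Y]
  exact inner_J_add_inner_J hJ2 hJg X _

lemma isUnitaryEndo_PiT (U Vv : E) : IsUnitaryEndo J (PiT J U Vv) where
  skew X Y := by
    simp only [PiT, real_inner_smul_left, inner_add_left, inner_sub_left]
    linear_combination -(1 / 2 : ℝ) * ⟪J U, Vv⟫ * inner_J_add_inner_J hJ2 hJg X Y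
  comm X := by
    simp only [PiT, map_smul, map_add, map_sub, map_neg, hJ2, inner_J_left hJ2 hJg,
      inner_neg_right, neg_neg, neg_smul, smul_neg]
    module

end Unitary

lemma starProjection_starProjection_apply {E : Type*} [NormedAddCommGroup E]
    [InnerProductSpace ℝ E] (K : Submodule ℝ E) [K.HasOrthogonalProjection] (X : E) :
    K.starProjection (K.starProjection X) = K.starProjection X :=
  K.starProjection_eq_self_iff.2 (K.starProjection_apply_mem X)

lemma projD_apply (D : Submodule ℝ V) (X : V) : projD D X = D.starProjection X := rfl

section Distribution

variable {J : V →ₗ[ℝ] V} (hJ2 : ∀ X : V, J (J X) = -X) (hJg : ∀ X Y : V, ⟪J X, J Y⟫ = ⟪X, Y⟫)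
  {D : Submodule ℝ V} (hJD : ∀ X ∈ D, J X ∈ D)
include hJ2 hJg hJD

lemma isUnitaryEndo_PhiT (U Vv : V) : IsUnitaryEndo J (PhiT J D U Vv) where
  skew X Y := by
    simp only [PhiT, hForm, omForm, projD_apply, real_inner_smul_left, inner_add_left,
      inner_sub_left, ← D.inner_starProjection_left_eq_right, starProjection_starProjection_apply]
    linear_combination -(1 / 4 : ℝ) * ⟪J U, Vv⟫ * inner_starProjection_J_add hJ2 hJg hJD X Y
      - (1 / 4 : ℝ) * ⟪D.starProjection (J U), Vv⟫ * inner_J_add_inner_J hJ2 hJg X Y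
  comm X := by
    simp only [PhiT, hForm, omForm, projD_apply, map_smul, map_add, map_sub, map_neg, hJ2,
      starProjection_J_comm hJ2 hJg hJD, inner_J_left hJ2 hJg, inner_neg_right, neg_neg,
      neg_smul, smul_neg]
    module

lemma isUnitaryEndo_PsiT (U Vv : V) : IsUnitaryEndo J (PsiT J D U Vv) where
  skew X Y := by
    simp only [PsiT, projD_apply, real_inner_smul_left, ← starProjection_J_comm hJ2 hJg hJD]
    linear_combination -omForm J D U Vv * inner_starProjection_J_add hJ2 hJg hJD X Y
  comm X := by
    simp only [PsiT, map_smul, projD_apply, starProjection_J_comm hJ2 hJg hJD]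

end Distribution

theorem stmt_15_general {V : Type*} [NormedAddCommGroup V] [InnerProductSpace ℝ V]
    [FiniteDimensional ℝ V]
    (J : V →ₗ[ℝ] V) (hJ2 : ∀ X : V, J (J X) = -X)
    (hJg : ∀ X Y : V, ⟪J X, J Y⟫ = ⟪X, Y⟫)
    (D : Submodule ℝ V)
    (hJD : ∀ X ∈ D, J X ∈ D) :
    ∀ a b c : ℝ, ∀ U Vv X Y Z W : V,
      dotRS (fun P Q W0 => a • PiT J P Q W0 + b • PhiT J D P Q W0 + c • PsiT J D P Q W0)
        (PiT J) U Vv X Y Z W = 0 := by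
  intro a b c U Vv X Y Z W
  have hR : IsUnitaryEndo J (a • PiT J U Vv + b • PhiT J D U Vv + c • PsiT J D U Vv) :=
    (((isUnitaryEndo_PiT hJ2 hJg U Vv).smul a).add
      ((isUnitaryEndo_PhiT hJ2 hJg hJD U Vv).smul b)).add
      ((isUnitaryEndo_PsiT hJ2 hJg hJD U Vv).smul c)
  exact der4_form4_PiT_eq_zero hR X Y Z W

theorem stmt_15 {V : Type*} [NormedAddCommGroup V] [InnerProductSpace ℝ V]
    [FiniteDimensional ℝ V]
    (J : V →ₗ[ℝ] V) (hJ2 : ∀ X : V, J (J X) = -X)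
    (hJg : ∀ X Y : V, ⟪J X, J Y⟫ = ⟪X, Y⟫)
    (D : Submodule ℝ V) (hD2 : Module.finrank ℝ ↥D = 2)
    (hJD : ∀ X ∈ D, J X ∈ D) :
    ∀ a b c : ℝ, ∀ U Vv X Y Z W : V,
      dotRS (fun P Q W0 => a • PiT J P Q W0 + b • PhiT J D P Q W0 + c • PsiT J D P Q W0)
        (PiT J) U Vv X Y Z W = 0 :=
  stmt_15_general J hJ2 hJg D hJD
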